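/- arXiv:1910.11681 — 4 statements merged into one kernel-verified Lean document; each statement's English description precedes it below -/
import Mathlib

section
/- The recurrence c(n+1,j,k) = (1 + k + n + j − ℓ/2)·c(n,j,k) + c(n,j−1,k), with initial condition c(0,0,k)=1 and c(0,j,k)=0 for j≠0 (and c(n,−1,k)=0), has the unique solution c(n,j,k) = (Γ(n+1+k−ℓ/2)/Γ(j+1+k−ℓ/2)) · C(n,j), where the Gamma quotient means the product (j+1+k−ℓ/2)(j+2+k−ℓ/2)···(n+k−ℓ/2). -/
/-!
A solution vanishes at negative `j`, so on `ℕ × ℕ` it is determined row by row from `c(0, ·)`.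
With `x = 1 + k - ℓ/2`, the rising product `(x + j)(x + j + 1)⋯(x + n - 1) · C(n, j)` satisfies
the same recurrence: after Pascal's rule this reduces to `(j + 1) C(n, j + 1) = (n - j) C(n, j)`.
-/

open Finset Polynomial

theorem ascPochhammer_eval_eq_prod_range {R : Type*} [CommSemiring R] (n : ℕ) (x : R) :
    (ascPochhammer R n).eval x = ∏ t ∈ range n, (x + t) := by
  induction n with
  | zero => simp
  | succ n ih => rw [ascPochhammer_succ_eval, ih, prod_range_succ]

theorem ascPochhammer_succ_eval_left {R : Type*} [CommSemiring R] (n : ℕ) (x : R) :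
    (ascPochhammer R (n + 1)).eval x = x * (ascPochhammer R n).eval (x + 1) := by
  simp [ascPochhammer_succ_left]

section

variable {R : Type*} [CommRing R]

/-- The Gamma quotient `Γ(n + x) / Γ(j + x)` times `C(n, j)`; for `j > n` the binomial makes it
vanish, whatever the truncated `n - j` gives. -/
noncomputable def pochhammerChoose (x : R) (n j : ℕ) : R :=
  (ascPochhammer R (n - j)).eval (x + j) * n.choose j

theorem pochhammerChoose_zero_zero (x : R) : pochhammerChoose x 0 0 = 1 := by
  simp [pochhammerChoose]

theorem pochhammerChoose_zero_succ (x : R) (j : ℕ) : pochhammerChoose x 0 (j + 1) = 0 := by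
  simp [pochhammerChoose]

theorem pochhammerChoose_succ_zero (x : R) (n : ℕ) :
    pochhammerChoose x (n + 1) 0 = (x + n) * pochhammerChoose x n 0 := by
  simp [pochhammerChoose, ascPochhammer_succ_eval, mul_comm]

theorem pochhammerChoose_succ_succ (x : R) (n j : ℕ) :
    pochhammerChoose x (n + 1) (j + 1) =
      (x + n + (j + 1)) * pochhammerChoose x n (j + 1) + pochhammerChoose x n j := by
  rcases lt_trichotomy j n with hjn | rfl | hnj
  · obtain ⟨m, rfl⟩ := Nat.exists_eq_add_of_lt hjn
    have hchoose : ((j + m + 1).choose (j + 1) : R) * (j + 1) = (j + m + 1).choose j * (m + 1) := by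
      have h := Nat.choose_succ_right_eq (j + m + 1) j
      rw [show j + m + 1 - j = m + 1 by omega] at h
      exact_mod_cast congrArg (Nat.cast (R := R)) h
    rw [pochhammerChoose, pochhammerChoose, pochhammerChoose,
      show j + m + 1 + 1 - (j + 1) = m + 1 by omega, show j + m + 1 - (j + 1) = m by omega,
      show j + m + 1 - j = m + 1 by omega, ascPochhammer_succ_eval, ascPochhammer_succ_eval_left,
      Nat.choose_succ_succ (j + m + 1) j, Nat.cast_succ j, ← add_assoc]
    push_cast
    linear_combination -(ascPochhammer R m).eval (x + j + 1) * hchoose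
  · simp [pochhammerChoose]
  · simp [pochhammerChoose, Nat.choose_eq_zero_of_lt, hnj, Nat.lt_succ_of_lt hnj]

end

theorem eq_zero_of_neg_of_recurrence {R : Type*} [Semiring R] {f : ℕ → ℤ → R} {c : ℕ → ℤ → R}
    (hrec : ∀ (n : ℕ) (j : ℤ), c (n + 1) j = f n j * c n j + c n (j - 1))
    (h0 : ∀ j < 0, c 0 j = 0) (n : ℕ) (j : ℤ) (hj : j < 0) : c n j = 0 := by
  induction n generalizing j with
  | zero => exact h0 j hj
  | succ n ih => rw [hrec, ih j hj, ih (j - 1) (by omega), mul_zero, add_zero]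

/-- The recurrence `c(n+1,j,k) = (1+k+n+j-ℓ/2) c(n,j,k) + c(n,j-1,k)` with initial condition
`c(0,0)=1`, `c(0,j)=0` for `j ≠ 0`, has the solution
`c(n,j) = (j+1+k-ℓ/2)(j+2+k-ℓ/2)⋯(n+k-ℓ/2) · C(n,j)` for `0 ≤ j ≤ n`. -/
theorem recurrence_solution_gamma_binomial (k l : ℝ) (c : ℕ → ℤ → ℝ)
    (h00 : c 0 0 = 1)
    (h0j : ∀ j : ℤ, j ≠ 0 → c 0 j = 0)
    (hrec : ∀ (n : ℕ) (j : ℤ), c (n + 1) j = (1 + k + n + j - l / 2) * c n j + c n (j - 1)) :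
    ∀ (n j : ℕ), j ≤ n →
      c n j = (∏ t ∈ Finset.range (n - j), ((j : ℝ) + 1 + k - l / 2 + t)) * (n.choose j : ℝ) := by
  have hneg := eq_zero_of_neg_of_recurrence hrec fun j hj => h0j j hj.ne
  have hsol : ∀ n j : ℕ, c n j = pochhammerChoose (1 + k - l / 2) n j := by
    intro n
    induction n with
    | zero =>
      rintro (_ | j)
      · simpa [pochhammerChoose_zero_zero] using h00
      · rw [pochhammerChoose_zero_succ]; exact h0j _ (by omega)
    | succ n ih =>
      rintro (_ | j)
      · rw [hrec, ih, hneg n ((0 : ℕ) - 1) (by norm_num), pochhammerChoose_succ_zero]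
        push_cast; ring
      · rw [hrec, Nat.cast_succ, add_sub_cancel_right, ← Nat.cast_succ, ih, ih,
          pochhammerChoose_succ_succ]; push_cast; ring
  intro n j _
  rw [hsol, pochhammerChoose, ascPochhammer_eval_eq_prod_range]
  congr 1
  exact prod_congr rfl fun t _ => by ring
end

section
/- The rescaled Gegenbauer polynomial G_N^s(x,y) := (N!·Γ(s)/Γ(s+⌈N/2⌉))·g_N^s(x,y), where g_N^s(x,y) = ∑_{2n₁+n₂=N} (−1)^{n₁}(Γ(s+n₁+n₂)/(Γ(s)n₁!n₂!))x^{n₂}y^{n₁}, has coefficients in ℤ[s]; i.e., G_N^s(x,y) ∈ ℤ[x,y,s]. -/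
open Finset MvPolynomial
open scoped Nat

/-!
Every summand of `G_N^s` is a product of `X 0`, `X 1` and factors `X 2 + j` with `j ∈ ℕ`,
scaled by `± N! / (n₁! (N - 2n₁)!)`. Since `n₁ + (N - 2n₁) ≤ N`, this is an integer, because
`a! b!` divides `(a + b)!`, which divides `N!`. So each summand, and hence `G_N^s`, lies in the
image of `ℤ[x,y,s] → ℚ[x,y,s]`.
-/

/-- The rescaled Gegenbauer polynomial
`G_N^s(x,y) = (N! Γ(s)/Γ(s+⌈N/2⌉)) ∑_{2n₁+n₂=N} (-1)^{n₁} (Γ(s+n₁+n₂)/(Γ(s) n₁! n₂!))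
x^{n₂} y^{n₁}`, written with the Gamma quotients expanded as rising factorials, so that
`N! Γ(s+n₁+n₂)/Γ(s+⌈N/2⌉) = N! ∏_{j=⌈N/2⌉}^{n₁+n₂-1} (s+j)` (using `n₁+n₂ = N-n₁ ≥ ⌈N/2⌉`).
Here the variables are `X 0 = x`, `X 1 = y`, `X 2 = s` in `ℚ[x,y,s]`. -/
noncomputable def GGegenbauer (N : ℕ) : MvPolynomial (Fin 3) ℚ :=
  ∑ n₁ ∈ Finset.range (N / 2 + 1),
    (((-1 : ℚ) ^ n₁ * (N.factorial : ℚ) /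
        ((n₁.factorial : ℚ) * ((N - 2 * n₁).factorial : ℚ))) •
      ((∏ j ∈ Finset.Ico ((N + 1) / 2) (N - n₁), (X 2 + C (j : ℚ))) *
        X 0 ^ (N - 2 * n₁) * X 1 ^ n₁))

theorem Nat.factorial_mul_factorial_dvd_factorial_of_add_le {a b n : ℕ} (h : a + b ≤ n) :
    a ! * b ! ∣ n ! :=
  (Nat.factorial_mul_factorial_dvd_factorial_add a b).trans (Nat.factorial_dvd_factorial h)

theorem GGegenbauer_coeff_eq_intCast {N n₁ : ℕ} (h : 2 * n₁ ≤ N) :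
    (-1 : ℚ) ^ n₁ * (N ! : ℚ) / ((n₁ ! : ℚ) * ((N - 2 * n₁)! : ℚ)) =
      (((-1) ^ n₁ * (N ! / (n₁ ! * (N - 2 * n₁)!) : ℕ) : ℤ) : ℚ) := by
  have hdvd : n₁ ! * (N - 2 * n₁)! ∣ N ! :=
    Nat.factorial_mul_factorial_dvd_factorial_of_add_le (by omega)
  rw [Int.cast_mul, Int.cast_pow, Int.cast_natCast, Nat.cast_div_charZero hdvd]
  push_cast
  ring

theorem MvPolynomial.X_mem_range_map {R S σ : Type*} [CommRing R] [CommRing S]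
    (f : R →+* S) (i : σ) : X i ∈ (map f : MvPolynomial σ R →+* MvPolynomial σ S).range :=
  ⟨X i, map_X f i⟩

/-- `G_N^s(x,y) ∈ ℤ[x,y,s]`: the rescaled Gegenbauer polynomial has integer coefficients. -/
theorem GGegenbauer_integral (N : ℕ) :
    ∃ P : MvPolynomial (Fin 3) ℤ, MvPolynomial.map (Int.castRingHom ℚ) P = GGegenbauer N := by
  rw [← RingHom.mem_range, GGegenbauer]
  refine sum_mem fun n₁ hn₁ => ?_
  have h2n : 2 * n₁ ≤ N := by
    have := mem_range.mp hn₁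
    omega
  have hX (i : Fin 3) := X_mem_range_map (Int.castRingHom ℚ) i
  have hshift (j : ℕ) :
      X 2 + C (j : ℚ) ∈ (map (Int.castRingHom ℚ) : MvPolynomial (Fin 3) ℤ →+* _).range := by
    rw [C_eq_coe_nat]
    exact add_mem (hX 2) (natCast_mem _ j)
  rw [GGegenbauer_coeff_eq_intCast h2n, Int.cast_smul_eq_zsmul]
  exact zsmul_mem
    (mul_mem (mul_mem (prod_mem fun j _ => hshift j) (pow_mem (hX 0) _)) (pow_mem (hX 1) _)) _
end

section
/- As formal power series in x and y, for any k with 2k−1 not a nonpositive integer: ∑_{N≥0} (Γ(2k+N−1)/Γ(k+N)) ∑_{r+s=N} C(k+N−1, r)·C(k+N−1, s)·x^r y^s = (Γ(2k−1)/Γ(k))·(1 − 2(x+y) + (x−y)²)^{1/2−k}. -/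
/-!
Write `F = (1 - u) ^ a` for the binomial series, with `a = 1/2 - k` and
`u = 2(x+y) - (x-y)²`. Its partial sums satisfy the binomial equation
`(1 - u) ∂ᵢF = a ∂ᵢ(1 - u) F` up to a multiple of a high power of `u`, so `F` satisfies it exactly.
Differentiating once more and multiplying by the unit `(1 - u)²` turns every derivative of `F`
into a polynomial multiple of `F`, and a polynomial identity then gives the second-order equation
`(1 - 2a) ∂ᵢF + 2 xᵢ ∂ᵢ²F = (E - 2a)(2E + 1 - 2a) F`, with `E = x ∂ₓ + y ∂_y` the Euler operator.
On the coefficient `c r s` of `x^r y^s` it reads `(r+1)(k+r) c (r+1) s = (N+2k-1)(N+k) c r s`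
(`N = r+s`), and symmetrically in `s`. The left-hand side of the theorem satisfies the same two
recurrences by `Γ(z+1) = z Γ(z)` and the absorption identities for `C(a, r)`, and both sides agree at `r = s = 0`.
-/

open Finset MvPolynomial

/-- The generalized binomial coefficient `C(a,r) = a(a-1)⋯(a-r+1)/r!`. -/
noncomputable def genBinom (a : ℝ) (r : ℕ) : ℝ :=
  (∏ t ∈ Finset.range r, (a - t)) / (r.factorial : ℝ)

/-- The polynomial `1 - 2(x+y) + (x-y)²` is `1 - u` with `u = 2(x+y) - (x-y)²`. -/
noncomputable def uPoly : MvPolynomial (Fin 2) ℝ :=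
  2 * (X 0 + X 1) - (X 0 - X 1) ^ 2

theorem genBinom_zero (a : ℝ) : genBinom a 0 = 1 := by simp [genBinom]

theorem genBinom_one (a : ℝ) : genBinom a 1 = a := by simp [genBinom]

theorem succ_mul_genBinom_succ (a : ℝ) (m : ℕ) :
    ((m : ℝ) + 1) * genBinom a (m + 1) = (a - m) * genBinom a m := by
  simp only [genBinom, prod_range_succ, Nat.factorial_succ, Nat.cast_mul, Nat.cast_succ]
  field_simp

theorem prod_range_succ_add_one_sub (a : ℝ) (r : ℕ) :
    ∏ t ∈ range (r + 1), (a + 1 - t) = (a + 1) * ∏ t ∈ range r, (a - t) := by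
  rw [prod_range_succ', mul_comm]
  push_cast
  ring_nf

theorem succ_mul_genBinom_add_one_succ (a : ℝ) (r : ℕ) :
    ((r : ℝ) + 1) * genBinom (a + 1) (r + 1) = (a + 1) * genBinom a r := by
  simp only [genBinom, prod_range_succ_add_one_sub, Nat.factorial_succ, Nat.cast_mul,
    Nat.cast_succ]
  field_simp

theorem sub_mul_genBinom_add_one (a : ℝ) (s : ℕ) :
    (a + 1 - s) * genBinom (a + 1) s = (a + 1) * genBinom a s := by
  have h := prod_range_succ_add_one_sub a s
  rw [prod_range_succ] at h
  simp only [genBinom]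
  rw [← mul_div_assoc, ← mul_div_assoc, ← h, mul_comm]

theorem Derivation.map_ofNat {R B M : Type*} [CommSemiring R] [CommSemiring B]
    [AddCommMonoid M] [Algebra R B] [Module B M] [Module R M] (D : Derivation R B M) (n : ℕ)
    [n.AtLeastTwo] : D (no_index (OfNat.ofNat n : B)) = 0 := by
  rw [← Nat.cast_ofNat, D.map_natCast]

section BinomialPartialSum

variable {A : Type*} [CommRing A] [Algebra ℝ A]

noncomputable def binomPartialSum (a : ℝ) (g : A) (M : ℕ) : A :=
  ∑ m ∈ range M, (genBinom a m * (-1) ^ m) • g ^ m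

theorem one_sub_mul_derivation_binomPartialSum (δ : Derivation ℝ A A) (a : ℝ) (g : A) (M : ℕ) :
    (1 - g) * δ (binomPartialSum a g (M + 1)) =
      a • (δ (1 - g) * binomPartialSum a g (M + 1)) +
        (((M : ℝ) + 1) * genBinom a (M + 1) * (-1) ^ M) • (δ g * g ^ M) := by
  induction M with
  | zero => simp [binomPartialSum, genBinom_one, genBinom_zero]
  | succ M ih =>
    rw [binomPartialSum, sum_range_succ, ← binomPartialSum, map_add, mul_add, ih,
      Derivation.map_smul, Derivation.leibniz_pow, map_sub, Derivation.map_one_eq_zero]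
    have hb := congrArg (algebraMap ℝ A) (succ_mul_genBinom_succ a (M + 1))
    simp only [Algebra.smul_def, map_mul, map_add, map_sub, map_pow, map_neg, map_one,
      map_natCast, Nat.cast_add, Nat.cast_one, Nat.add_sub_cancel, zero_sub] at hb ⊢
    linear_combination (-1) ^ M * δ g * g ^ (M + 1) * hb

theorem sq_mul_derivation_derivation_of_mul_derivation (δ ε : Derivation ℝ A A) {D F : A}
    {a : ℝ} (hδ : D * δ F = a • (δ D * F)) (hε : D * ε F = a • (ε D * F)) :
    D ^ 2 * δ (ε F) = a • ((D * δ (ε D) + (a - 1) • (δ D * ε D)) * F) := by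
  have h := congrArg δ hε
  rw [Derivation.leibniz, Derivation.map_smul, Derivation.leibniz] at h
  simp only [Algebra.smul_def, map_sub, map_one] at h hδ hε ⊢
  linear_combination D * h + algebraMap ℝ A a * ε D * hδ - δ D * hε

end BinomialPartialSum

namespace MvPowerSeries

variable {σ R : Type*} [CommSemiring R]

theorem coeff_mul_eq_of_coeff_eq {p q q' : MvPowerSeries σ R} {d : σ →₀ ℕ}
    (h : ∀ e ≤ d, coeff e q = coeff e q') : coeff d (p * q) = coeff d (p * q') := by
  classical
  simp only [coeff_mul]
  refine sum_congr rfl fun e he => ?_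
  rw [h e.2 (mem_antidiagonal.mp he ▸ le_add_self)]

theorem coeff_pow_eq_zero_of_degree_lt {g : MvPowerSeries σ R} (hg : constantCoeff g = 0)
    {d : σ →₀ ℕ} {m : ℕ} (h : d.degree < m) : coeff d (g ^ m) = 0 :=
  coeff_of_lt_order <| (Nat.cast_lt.mpr h).trans_le (le_order_pow_of_constantCoeff_eq_zero m hg)

theorem coeff_X_mul_pderiv (i : σ) (f : MvPowerSeries σ R) (d : σ →₀ ℕ) :
    coeff d (X i * pderiv R i f) = d i * coeff d f := by
  rw [X_def, coeff_monomial_mul]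
  split_ifs with h
  · have hi : 1 ≤ d i := by simpa using h i
    rw [one_mul, coeff_pderiv, tsub_add_cancel_of_le h, mul_comm, Finsupp.tsub_apply,
      Finsupp.single_eq_same]
    norm_cast
    rw [Nat.sub_add_cancel hi]
  · have hi : d i = 0 := by
      contrapose! h
      simpa [Finsupp.single_le_iff] using Nat.one_le_iff_ne_zero.mpr h
    simp [hi]

section Euler

variable [Fintype σ]

variable (σ R) in
noncomputable def eulerDerivation : Derivation R (MvPowerSeries σ R) (MvPowerSeries σ R) :=
  ∑ i : σ, (X i : MvPowerSeries σ R) • pderiv R i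

theorem eulerDerivation_apply (f : MvPowerSeries σ R) :
    eulerDerivation σ R f = ∑ i, X i * pderiv R i f := by
  rw [eulerDerivation, ← Derivation.coeFnAddMonoidHom_apply, map_sum, Finset.sum_apply]
  simp [Derivation.coeFnAddMonoidHom_apply, Derivation.smul_apply]

theorem coeff_eulerDerivation (f : MvPowerSeries σ R) (d : σ →₀ ℕ) :
    coeff d (eulerDerivation σ R f) = d.degree * coeff d f := by
  simp [eulerDerivation_apply, coeff_X_mul_pderiv, ← sum_mul, Finsupp.degree_eq_sum]

theorem mul_eulerDerivation_eq_of_mul_pderiv_eq {D F : MvPowerSeries σ R} {a : R}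
    (h : ∀ i, D * pderiv R i F = a • (pderiv R i D * F)) :
    D * eulerDerivation σ R F = a • (eulerDerivation σ R D * F) := by
  simp only [eulerDerivation_apply, mul_sum, sum_mul, smul_sum]
  refine sum_congr rfl fun i _ => ?_
  rw [mul_left_comm, h, mul_smul_comm, mul_assoc]

end Euler

/-- The binomial series `(1 - g) ^ a` for `g` without constant term: only `g ^ m` with
`m ≤ deg d` contributes to the coefficient of `d`. -/
noncomputable def binomSeries (a : ℝ) (g : MvPowerSeries σ ℝ) : MvPowerSeries σ ℝ :=
  fun d => ∑ m ∈ range (d.degree + 1), genBinom a m * (-1) ^ m * coeff d (g ^ m)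

theorem coeff_binomSeries (a : ℝ) (g : MvPowerSeries σ ℝ) (d : σ →₀ ℕ) :
    coeff d (binomSeries a g) =
      ∑ m ∈ range (d.degree + 1), genBinom a m * (-1) ^ m * coeff d (g ^ m) :=
  rfl

theorem constantCoeff_binomSeries (a : ℝ) (g : MvPowerSeries σ ℝ) :
    constantCoeff (binomSeries a g) = 1 := by
  rw [← coeff_zero_eq_constantCoeff_apply, coeff_binomSeries]
  simp [genBinom_zero]

theorem coeff_binomSeries_eq_coeff_binomPartialSum {a : ℝ} {g : MvPowerSeries σ ℝ}
    (hg : constantCoeff g = 0) {d : σ →₀ ℕ} {M : ℕ} (hM : d.degree < M) :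
    coeff d (binomSeries a g) = coeff d (binomPartialSum a g M) := by
  simp only [binomPartialSum, map_sum, coeff_smul]
  refine sum_subset (range_subset_range.mpr hM) fun m _ hm => ?_
  rw [coeff_pow_eq_zero_of_degree_lt hg (by simpa using hm), mul_zero]

theorem one_sub_mul_pderiv_binomSeries (a : ℝ) {g : MvPowerSeries σ ℝ}
    (hg : constantCoeff g = 0) (i : σ) :
    (1 - g) * pderiv ℝ i (binomSeries a g) = a • (pderiv ℝ i (1 - g) * binomSeries a g) := by
  ext d
  set S := binomPartialSum a g (d.degree + 1 + 1)
  have hdeg : ∀ e ≤ d, e.degree ≤ d.degree := fun e he => by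
    simpa using Finsupp.degree_mono he
  have hS : ∀ e, e.degree ≤ d.degree + 1 → coeff e (binomSeries a g) = coeff e S :=
    fun e he => coeff_binomSeries_eq_coeff_binomPartialSum hg (by omega)
  have hderiv : coeff d ((1 - g) * pderiv ℝ i (binomSeries a g)) =
      coeff d ((1 - g) * pderiv ℝ i S) := by
    refine coeff_mul_eq_of_coeff_eq fun e he => ?_
    simp only [coeff_pderiv]
    rw [hS]
    simpa using hdeg e he
  have hmul : coeff d (pderiv ℝ i (1 - g) * binomSeries a g) =
      coeff d (pderiv ℝ i (1 - g) * S) :=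
    coeff_mul_eq_of_coeff_eq fun e he => hS e (by have := hdeg e he; omega)
  have hrem : coeff d (pderiv ℝ i g * g ^ (d.degree + 1)) = 0 := by
    rw [coeff_mul_eq_of_coeff_eq (q' := 0), mul_zero, map_zero]
    intro e he
    rw [map_zero, coeff_pow_eq_zero_of_degree_lt hg (by have := hdeg e he; omega)]
  rw [coeff_smul, hderiv, hmul, one_sub_mul_derivation_binomPartialSum, map_add, coeff_smul,
    coeff_smul, hrem, mul_zero, add_zero]

noncomputable def cohenSeries (a : ℝ) : MvPowerSeries (Fin 2) ℝ :=
  binomSeries a uPoly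

theorem coe_uPoly :
    (uPoly : MvPowerSeries (Fin 2) ℝ) = 2 * (X 0 + X 1) - (X 0 - X 1) ^ 2 := by
  rw [← coeToMvPowerSeries.ringHom_apply, uPoly]
  simp only [map_sub, map_mul, map_add, map_pow, map_ofNat]
  simp only [coeToMvPowerSeries.ringHom_apply, coe_X]

theorem constantCoeff_coe_uPoly : constantCoeff (uPoly : MvPowerSeries (Fin 2) ℝ) = 0 := by
  simp [coe_uPoly]

theorem pderiv_zero_coe_uPoly :
    pderiv ℝ 0 (uPoly : MvPowerSeries (Fin 2) ℝ) = 2 - 2 * (X 0 - X 1) := by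
  simp [coe_uPoly, pderiv_X_of_ne (by decide : (1 : Fin 2) ≠ 0), Derivation.leibniz_pow,
    Derivation.map_ofNat]

theorem pderiv_one_coe_uPoly :
    pderiv ℝ 1 (uPoly : MvPowerSeries (Fin 2) ℝ) = 2 - 2 * (X 1 - X 0) := by
  simp [coe_uPoly, pderiv_X_of_ne (by decide : (0 : Fin 2) ≠ 1), Derivation.leibniz_pow,
    Derivation.map_ofNat]

theorem pderiv_pderiv_self_coe_uPoly (i : Fin 2) :
    pderiv ℝ i (pderiv ℝ i (uPoly : MvPowerSeries (Fin 2) ℝ)) = -2 := by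
  fin_cases i
  · simp [pderiv_zero_coe_uPoly, pderiv_X_of_ne (by decide : (1 : Fin 2) ≠ 0),
      Derivation.map_ofNat]
  · simp [pderiv_one_coe_uPoly, pderiv_X_of_ne (by decide : (0 : Fin 2) ≠ 1),
      Derivation.map_ofNat]

theorem one_sub_coe_uPoly :
    (1 - uPoly : MvPowerSeries (Fin 2) ℝ) = 1 - 2 * (X 0 + X 1) + (X 0 - X 1) ^ 2 := by
  rw [coe_uPoly]
  ring

theorem eulerDerivation_one_sub_coe_uPoly :
    eulerDerivation (Fin 2) ℝ (1 - uPoly) = 2 * (X 0 - X 1) ^ 2 - 2 * (X 0 + X 1) := by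
  rw [eulerDerivation_apply, Fin.sum_univ_two, map_sub, map_sub, Derivation.map_one_eq_zero,
    Derivation.map_one_eq_zero, pderiv_zero_coe_uPoly, pderiv_one_coe_uPoly]
  ring

theorem eulerDerivation_eulerDerivation_one_sub_coe_uPoly :
    eulerDerivation (Fin 2) ℝ (eulerDerivation (Fin 2) ℝ (1 - uPoly)) =
      4 * (X 0 - X 1) ^ 2 - 2 * (X 0 + X 1) := by
  rw [eulerDerivation_one_sub_coe_uPoly, eulerDerivation_apply]
  simp [pderiv_X_of_ne (by decide : (1 : Fin 2) ≠ 0), pderiv_X_of_ne (by decide : (0 : Fin 2) ≠ 1),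
    Derivation.leibniz_pow, Derivation.map_ofNat]
  ring

theorem cohenSeries_pde (a : ℝ) (i : Fin 2) :
    (1 - 2 * a) • pderiv ℝ i (cohenSeries a) +
        (2 : ℝ) • (X i * pderiv ℝ i (pderiv ℝ i (cohenSeries a))) =
      (2 : ℝ) • eulerDerivation (Fin 2) ℝ (eulerDerivation (Fin 2) ℝ (cohenSeries a)) +
        (1 - 6 * a) • eulerDerivation (Fin 2) ℝ (cohenSeries a) -
          (2 * a * (1 - 2 * a)) • cohenSeries a := by
  set F := cohenSeries a
  set E := eulerDerivation (Fin 2) ℝ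
  have hD0 : (1 - uPoly : MvPowerSeries (Fin 2) ℝ) ≠ 0 := fun h => by
    simpa [constantCoeff_coe_uPoly] using congrArg constantCoeff h
  have h1 (j : Fin 2) : (1 - uPoly) * pderiv ℝ j F = a • (pderiv ℝ j (1 - uPoly) * F) :=
    one_sub_mul_pderiv_binomSeries a constantCoeff_coe_uPoly j
  have h2 := sq_mul_derivation_derivation_of_mul_derivation _ _ (h1 i) (h1 i)
  have hE : (1 - uPoly) * E F = a • (E (1 - uPoly) * F) :=
    mul_eulerDerivation_eq_of_mul_pderiv_eq h1
  have hEE := sq_mul_derivation_derivation_of_mul_derivation _ _ hE hE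
  rw [map_sub (pderiv ℝ i), map_sub (pderiv ℝ i), Derivation.map_one_eq_zero, map_zero,
    pderiv_pderiv_self_coe_uPoly] at h2
  rw [eulerDerivation_eulerDerivation_one_sub_coe_uPoly, eulerDerivation_one_sub_coe_uPoly]
    at hEE
  rw [eulerDerivation_one_sub_coe_uPoly] at hE
  -- after multiplication by `(1 - u)²` every term is a polynomial multiple of `F`
  refine (mul_right_inj' (pow_ne_zero 2 hD0)).mp ?_
  linear_combination (norm := skip) ((1 - 2 * a) • (1 - uPoly)) * h1 i + (2 : ℝ) • X i * h2 -
    (2 : ℝ) • hEE - ((1 - 6 * a) • (1 - uPoly)) * hE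
  rw [map_sub, Derivation.map_one_eq_zero]
  obtain rfl | rfl : i = 0 ∨ i = 1 := by omega
  all_goals
    simp only [one_sub_coe_uPoly, pderiv_zero_coe_uPoly, pderiv_one_coe_uPoly, Algebra.smul_def,
      map_sub, map_mul, map_one, map_ofNat, Nat.cast_one, Nat.cast_ofNat]
    ring

theorem coeff_add_single_cohenSeries (a : ℝ) (i : Fin 2) (d : Fin 2 →₀ ℕ) :
    ((d i : ℝ) + 1) * (1 - 2 * a + 2 * d i) * coeff (d + Finsupp.single i 1) (cohenSeries a) =
      (d.degree - 2 * a) * (2 * d.degree + 1 - 2 * a) * coeff d (cohenSeries a) := by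
  have h := congrArg (coeff d) (cohenSeries_pde a i)
  simp only [map_add, map_sub, coeff_smul, coeff_X_mul_pderiv, coeff_eulerDerivation,
    coeff_pderiv] at h
  linear_combination h

theorem coeff_cohenSeries (a : ℝ) (r s : ℕ) :
    coeff (Finsupp.single 0 r + Finsupp.single 1 s) (cohenSeries a) =
      ∑ m ∈ range (r + s + 1), genBinom a m * (-1) ^ m *
        MvPolynomial.coeff (Finsupp.single 0 r + Finsupp.single 1 s) (uPoly ^ m) := by
  simp only [cohenSeries, coeff_binomSeries, map_add, Finsupp.degree_single,
    ← MvPolynomial.coe_pow, MvPolynomial.coeff_coe]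

theorem coeff_cohenSeries_succ_fst (a : ℝ) (r s : ℕ) :
    ((r : ℝ) + 1) * (1 - 2 * a + 2 * r) *
        coeff (Finsupp.single 0 (r + 1) + Finsupp.single 1 s) (cohenSeries a) =
      ((r + s : ℝ) - 2 * a) * (2 * (r + s) + 1 - 2 * a) *
        coeff (Finsupp.single 0 r + Finsupp.single 1 s) (cohenSeries a) := by
  have h := coeff_add_single_cohenSeries a 0 (Finsupp.single 0 r + Finsupp.single 1 s)
  rw [add_right_comm, ← Finsupp.single_add] at h
  simpa using h

theorem coeff_cohenSeries_succ_snd (a : ℝ) (r s : ℕ) :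
    ((s : ℝ) + 1) * (1 - 2 * a + 2 * s) *
        coeff (Finsupp.single 0 r + Finsupp.single 1 (s + 1)) (cohenSeries a) =
      ((r + s : ℝ) - 2 * a) * (2 * (r + s) + 1 - 2 * a) *
        coeff (Finsupp.single 0 r + Finsupp.single 1 s) (cohenSeries a) := by
  have h := coeff_add_single_cohenSeries a 1 (Finsupp.single 0 r + Finsupp.single 1 s)
  rw [add_assoc, ← Finsupp.single_add] at h
  simpa using h

end MvPowerSeries

theorem eq_of_recurrences {M₀ : Type*} [MonoidWithZero M₀] [IsLeftCancelMulZero M₀]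
    {f g : ℕ → ℕ → M₀} {a b : ℕ → M₀} (ha : ∀ n, a n ≠ 0) (h₀ : f 0 0 = g 0 0)
    (hf₁ : ∀ r s, a r * f (r + 1) s = b (r + s) * f r s)
    (hf₂ : ∀ r s, a s * f r (s + 1) = b (r + s) * f r s)
    (hg₁ : ∀ r s, a r * g (r + 1) s = b (r + s) * g r s)
    (hg₂ : ∀ r s, a s * g r (s + 1) = b (r + s) * g r s) (r s : ℕ) :
    f r s = g r s := by
  induction s with
  | zero =>
    induction r with
    | zero => exact h₀
    | succ r ih => exact mul_left_cancel₀ (ha r) (by rw [hf₁, hg₁, ih])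
  | succ s ih => exact mul_left_cancel₀ (ha s) (by rw [hf₂, hg₂, ih])

noncomputable def cohenCoeff (k : ℝ) (r s : ℕ) : ℝ :=
  Real.Gamma (2 * k + (r + s : ℕ) - 1) / Real.Gamma (k + (r + s : ℕ)) *
    genBinom (k + (r + s : ℕ) - 1) r * genBinom (k + (r + s : ℕ) - 1) s

theorem cohenCoeff_comm (k : ℝ) (r s : ℕ) : cohenCoeff k r s = cohenCoeff k s r := by
  rw [cohenCoeff, cohenCoeff, add_comm r s]
  ring

theorem succ_mul_cohenCoeff_succ {k : ℝ} {r s : ℕ} (hk : k + (r + s : ℕ) ≠ 0)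
    (hk' : 2 * k + (r + s : ℕ) - 1 ≠ 0) :
    ((r : ℝ) + 1) * (k + r) * cohenCoeff k (r + 1) s =
      (((r + s : ℕ) : ℝ) + 2 * k - 1) * (((r + s : ℕ) : ℝ) + k) * cohenCoeff k r s := by
  set N : ℝ := ((r + s : ℕ) : ℝ) with hN
  have hr : ((r : ℝ) + 1) * genBinom (k + N) (r + 1) = (k + N) * genBinom (k + N - 1) r := by
    simpa using succ_mul_genBinom_add_one_succ (k + N - 1) r
  have hs : (k + r) * genBinom (k + N) s = (k + N) * genBinom (k + N - 1) s := by
    have h := sub_mul_genBinom_add_one (k + N - 1) s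
    rwa [sub_add_cancel, show k + N - s = k + r by push_cast [hN]; ring] at h
  have hN' : ((r + 1 + s : ℕ) : ℝ) = N + 1 := by push_cast [hN]; ring
  rw [cohenCoeff, cohenCoeff, hN', show k + (N + 1) - 1 = k + N by ring,
    show 2 * k + (N + 1) - 1 = 2 * k + N - 1 + 1 by ring, Real.Gamma_add_one hk', ← add_assoc,
    Real.Gamma_add_one hk]
  calc ((r : ℝ) + 1) * (k + r) * ((2 * k + N - 1) * Real.Gamma (2 * k + N - 1) /
          ((k + N) * Real.Gamma (k + N)) * genBinom (k + N) (r + 1) * genBinom (k + N) s)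
      = (2 * k + N - 1) * Real.Gamma (2 * k + N - 1) / ((k + N) * Real.Gamma (k + N)) *
          (((r : ℝ) + 1) * genBinom (k + N) (r + 1)) * ((k + r) * genBinom (k + N) s) := by ring
    _ = (N + 2 * k - 1) * (N + k) * (Real.Gamma (2 * k + N - 1) / Real.Gamma (k + N) *
          genBinom (k + N - 1) r * genBinom (k + N - 1) s) := by
      rw [hr, hs]
      field_simp
      ring

/-- Cohen's generating function: as formal power series in `x` and `y`, for `2k-1` not a
nonpositive integer,
`∑_N (Γ(2k+N-1)/Γ(k+N)) ∑_{r+s=N} C(k+N-1,r) C(k+N-1,s) x^r y^s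
  = (Γ(2k-1)/Γ(k)) (1 - 2(x+y) + (x-y)²)^{1/2-k}`,
stated coefficientwise: the right-hand side is expanded by the binomial series
`(1-u)^{1/2-k} = ∑_m C(1/2-k,m) (-u)^m` with `u = 2(x+y) - (x-y)²`; since `u` has no constant
term, the coefficient of `x^r y^s` only involves `m ≤ r+s`. -/
theorem cohen_generating_function (k : ℝ) (hk : ∀ m : ℕ, 2 * k - 1 ≠ -(m : ℝ)) (r s : ℕ) :
    Real.Gamma (2 * k + (r + s : ℕ) - 1) / Real.Gamma (k + (r + s : ℕ)) *
        genBinom (k + (r + s : ℕ) - 1) r * genBinom (k + (r + s : ℕ) - 1) s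
      = Real.Gamma (2 * k - 1) / Real.Gamma k *
          ∑ m ∈ Finset.range (r + s + 1),
            genBinom (1 / 2 - k) m * (-1 : ℝ) ^ m *
              MvPolynomial.coeff (Finsupp.single 0 r + Finsupp.single 1 s) (uPoly ^ m) := by
  have hk₁ (n : ℕ) : k + n ≠ 0 := fun h => hk (2 * n + 1) (by push_cast; linarith)
  have hk₂ (n : ℕ) : 2 * k + n - 1 ≠ 0 := fun h => hk n (by linarith)
  set G := Real.Gamma (2 * k - 1) / Real.Gamma k
  rw [← MvPowerSeries.coeff_cohenSeries]
  refine eq_of_recurrences (f := cohenCoeff k)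
    (g := fun r s => G * MvPowerSeries.coeff (Finsupp.single 0 r + Finsupp.single 1 s)
      (MvPowerSeries.cohenSeries (1 / 2 - k)))
    (a := fun n => ((n : ℝ) + 1) * (k + n)) (b := fun n => ((n : ℝ) + 2 * k - 1) * (n + k))
    (fun n => mul_ne_zero n.cast_add_one_ne_zero (hk₁ n)) ?base ?lhs_fst ?lhs_snd ?rhs_fst
    ?rhs_snd r s
  case base =>
    simp [cohenCoeff, MvPowerSeries.cohenSeries, MvPowerSeries.constantCoeff_binomSeries,
      genBinom_zero, G]
  case lhs_fst => exact fun r s => succ_mul_cohenCoeff_succ (hk₁ _) (hk₂ _)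
  case lhs_snd =>
    intro r s
    rw [cohenCoeff_comm, cohenCoeff_comm k r, add_comm r s]
    exact succ_mul_cohenCoeff_succ (hk₁ _) (hk₂ _)
  case rhs_fst =>
    intro r s
    have h := MvPowerSeries.coeff_cohenSeries_succ_fst (1 / 2 - k) r s
    push_cast
    linear_combination G / 2 * h
  case rhs_snd =>
    intro r s
    have h := MvPowerSeries.coeff_cohenSeries_succ_snd (1 / 2 - k) r s
    push_cast
    linear_combination G / 2 * h
end

section
/- For the formal power series identity underlying Lemma 3.2: if F(z,w) = ∑_{α,j} (c(α,j)/(α!j!)) z^α w^j is analytic near 0 in ℂ^{ℓ−1}×ℂ, Q is the quadratic form on ℂ^{ℓ−1} with Gram matrix S_L, m > 0, and the slash F|_k J_v(z,w) := (Q(z) − m w²)^{−k} F(R_v z/(Q(z)−mw²), w/(Q(z)−mw²)) for v with Q(v)=1, then ∂_w^n|_{w=0}(F|_k J_v) = ∑_{i=0}^{⌊n/2⌋} (n!/(i!(n−2i)!))·m^i·((E_z + k + n − 2i)^{(i)} ∂_w^{n−2i}|_{w=0}F)|_{k+n−i} J_v, where (E_z+a)^{(i)} = (E_z+a)(E_z+a+1)···(E_z+a+i−1)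 and E_z is the Euler operator in z. -/
open Matrix Finset

/-- The rising Euler operator `(E_z+a)^{(i)} = (E_z+a)(E_z+a+1)⋯(E_z+a+i-1)` (composition of
operators), where `E_z f z = ∑ j z_j ∂_j f(z)` is the Euler operator, defined on functions
via Fréchet partial derivatives. -/
noncomputable def risingEulerFun (d : ℕ) (a : ℂ) :
    ℕ → ((Fin d → ℂ) → ℂ) → ((Fin d → ℂ) → ℂ)
  | 0, f => f
  | i + 1, f => fun z =>
      (∑ j, z j * fderiv ℂ (risingEulerFun d (a + 1) i f) z (Pi.single j 1)) +
        a * risingEulerFun d (a + 1) i f z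

/-!
The chain rule gives the first-order identity
`∂_w (F|_k J_v) = (∂_w F)|_{k+1} J_v + 2 m w ((E + k) F)|_{k+1} J_v`, where `E` is the Euler
operator in `(z, w)`. In the `n`-th derivative at `w = 0` the factor `w` contributes
`2 m n ∂_w^{n-1}`, and since mixed partials commute, `∂_w^j|_{w=0}` of `(E + k) F` is
`(E_z + k + j) ∂_w^j|_{w=0} F`. So both sides satisfy the same two-step recursion in `n`, for all
`k` and `F` at once; on the right it is the recursion
`c(n+2, i+1) = c(n+1, i+1) + 2 (n+1) c(n, i)` of `c(n, i) = n! / (i! (n-2i)!)`.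
-/

open Topology Function Set

theorem iteratedDeriv_id_mul_zero {f : ℂ → ℂ} {n : ℕ} (hf : ContDiffAt ℂ n f 0) :
    iteratedDeriv n (fun w => w * f w) 0 = n * iteratedDeriv (n - 1) f 0 := by
  rw [iteratedDeriv_fun_mul (f := fun w => w) contDiffAt_fun_id hf]
  rcases n with _ | n <;> simp [iteratedDeriv_fun_id_zero]

noncomputable section

variable {E : Type*} [NormedAddCommGroup E] [NormedSpace ℂ E]
variable {F : E → ℂ → ℂ} {g : E → ℂ}

def shiftedEuler (a : ℂ) (g : E → ℂ) : E → ℂ :=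
  fun z => fderiv ℂ g z z + a * g z

def risingEuler (a : ℂ) : ℕ → (E → ℂ) → E → ℂ
  | 0, g => g
  | i + 1, g => shiftedEuler a (risingEuler (a + 1) i g)

def partialW (F : E → ℂ → ℂ) : E → ℂ → ℂ :=
  fun z w => fderiv ℂ (uncurry F) (z, w) (0, 1)

def iteratedDerivAtZero (j : ℕ) (F : E → ℂ → ℂ) : E → ℂ :=
  fun z => iteratedDeriv j (F z) 0

theorem AnalyticOnNhd.shiftedEuler (hg : AnalyticOnNhd ℂ g univ) (a : ℂ) :
    AnalyticOnNhd ℂ (shiftedEuler a g) univ := fun z _ =>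
  have hdiag : AnalyticAt ℂ (fun y => fderiv ℂ g y y) z :=
    ((ContinuousLinearMap.apply ℂ ℂ (E := E)).flip.analyticAt_bilinear _).comp₂
      (hg z trivial).fderiv analyticAt_id
  hdiag.add (analyticAt_const.mul (hg z trivial))

theorem AnalyticOnNhd.risingEuler (hg : AnalyticOnNhd ℂ g univ) (i : ℕ) (a : ℂ) :
    AnalyticOnNhd ℂ (risingEuler a i g) univ := by
  induction i generalizing a with
  | zero => exact hg
  | succ i ih => exact (ih (a + 1)).shiftedEuler a

theorem AnalyticOnNhd.partialW (hF : AnalyticOnNhd ℂ (uncurry F) univ) :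
    AnalyticOnNhd ℂ (uncurry (partialW F)) univ := fun p _ =>
  (ContinuousLinearMap.apply ℂ ℂ ((0, 1) : E × ℂ)).analyticAt _ |>.comp (hF p trivial).fderiv

theorem shiftedEuler_eq_zero_add (a : ℂ) (g : E → ℂ) :
    shiftedEuler a g = shiftedEuler 0 g + a • g := by
  ext z; simp [shiftedEuler]

theorem shiftedEuler_comm (hg : AnalyticOnNhd ℂ g univ) (a b : ℂ) :
    shiftedEuler a (shiftedEuler b g) = shiftedEuler b (shiftedEuler a g) := by
  have hlin (c : ℂ) : shiftedEuler 0 (shiftedEuler c g) =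
      shiftedEuler 0 (shiftedEuler 0 g) + c • shiftedEuler 0 g := by
    ext z
    have h₀ := (hg.shiftedEuler 0 z trivial).differentiableAt
    have h := (hg z trivial).differentiableAt
    rw [shiftedEuler_eq_zero_add c g]
    simp [shiftedEuler, fderiv_add h₀ (h.const_smul c), fderiv_const_smul h]
  rw [shiftedEuler_eq_zero_add a (shiftedEuler b g), shiftedEuler_eq_zero_add b (shiftedEuler a g),
    hlin b, hlin a, shiftedEuler_eq_zero_add a g, shiftedEuler_eq_zero_add b g]
  ext z
  simp only [Pi.add_apply, Pi.smul_apply, smul_eq_mul]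
  ring

theorem risingEuler_shiftedEuler_comm (hg : AnalyticOnNhd ℂ g univ) (a : ℂ) (i : ℕ)
    (b : ℂ) :
    risingEuler b i (shiftedEuler a g) = shiftedEuler a (risingEuler b i g) := by
  induction i generalizing b with
  | zero => rfl
  | succ i ih =>
    rw [risingEuler, risingEuler, ih, shiftedEuler_comm (hg.risingEuler i (b + 1))]

theorem hasDerivAt_partialW (hF : AnalyticOnNhd ℂ (uncurry F) univ) (z : E) (w : ℂ) :
    HasDerivAt (F z) (partialW F z w) w :=
  (hF (z, w) trivial).differentiableAt.hasFDerivAt.comp_hasDerivAt w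
    ((hasDerivAt_const w z).prodMk (hasDerivAt_id w))

theorem iteratedDerivAtZero_succ (hF : AnalyticOnNhd ℂ (uncurry F) univ) (j : ℕ) :
    iteratedDerivAtZero (j + 1) F = iteratedDerivAtZero j (partialW F) := by
  funext z
  rw [iteratedDerivAtZero, iteratedDeriv_succ', funext (hasDerivAt_partialW hF z · |>.deriv)]
  rfl

theorem AnalyticOnNhd.iteratedDerivAtZero (hF : AnalyticOnNhd ℂ (uncurry F) univ) (j : ℕ) :
    AnalyticOnNhd ℂ (iteratedDerivAtZero j F) univ := by
  induction j generalizing F with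
  | zero => exact fun z _ => (hF (z, 0) trivial).curry_left
  | succ j ih => rw [iteratedDerivAtZero_succ hF]; exact ih hF.partialW

theorem fderiv_curry_left_apply (hF : AnalyticOnNhd ℂ (uncurry F) univ) (z u : E) (w : ℂ) :
    fderiv ℂ (fun y => F y w) z u = fderiv ℂ (uncurry F) (z, w) (u, 0) := by
  have h := (hF (z, w) trivial).differentiableAt.hasFDerivAt.comp z
    (hasFDerivAt_prodMk_left (𝕜 := ℂ) z w)
  rw [show (fun y => F y w) = uncurry F ∘ fun y => (y, w) from rfl, h.fderiv]
  rfl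

theorem hasDerivAt_fderiv_apply_fst (hF : AnalyticOnNhd ℂ (uncurry F) univ) (z u : E) (w : ℂ) :
    HasDerivAt (fun w => fderiv ℂ (uncurry F) (z, w) (u, 0))
      (fderiv ℂ (uncurry (partialW F)) (z, w) (u, 0)) w := by
  have hF' := (hF (z, w) trivial).fderiv.differentiableAt.hasFDerivAt
  have happly (v : E × ℂ) : HasFDerivAt (fun q => fderiv ℂ (uncurry F) q v)
      ((ContinuousLinearMap.apply ℂ ℂ v).comp (fderiv ℂ (fderiv ℂ (uncurry F)) (z, w)))
      (z, w) :=
    (ContinuousLinearMap.apply ℂ ℂ v).hasFDerivAt.comp (z, w) hF'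
  have hsymm := second_derivative_symmetric
    (fun y => (hF y trivial).differentiableAt.hasFDerivAt) hF' (0, 1) (u, 0)
  rw [show uncurry (partialW F) = fun q => fderiv ℂ (uncurry F) q (0, 1) from rfl,
    (happly (0, 1)).fderiv]
  exact ((happly (u, 0)).comp_hasDerivAt w
    ((hasDerivAt_const w z).prodMk (hasDerivAt_id w))).congr_deriv hsymm

theorem iteratedDeriv_fderiv_apply_fst (hF : AnalyticOnNhd ℂ (uncurry F) univ) (j : ℕ)
    (z u : E) :
    iteratedDeriv j (fun w => fderiv ℂ (uncurry F) (z, w) (u, 0)) 0 =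
      fderiv ℂ (iteratedDerivAtZero j F) z u := by
  induction j generalizing F with
  | zero => exact (fderiv_curry_left_apply hF z u 0).symm
  | succ j ih =>
    rw [iteratedDeriv_succ', funext fun w => (hasDerivAt_fderiv_apply_fst hF z u w).deriv,
      ih hF.partialW, iteratedDerivAtZero_succ hF]

theorem curry_shiftedEuler_uncurry_apply (a : ℂ) (z : E) (w : ℂ) :
    curry (shiftedEuler a (uncurry F)) z w =
      fderiv ℂ (uncurry F) (z, w) (z, 0) + w * partialW F z w + a * F z w := by
  have hsplit : ((z, w) : E × ℂ) = (z, 0) + w • (0, 1) := by simp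
  rw [curry_apply, shiftedEuler, partialW, hsplit, map_add, map_smul, smul_eq_mul, ← hsplit]
  rfl

theorem iteratedDerivAtZero_shiftedEuler (hF : AnalyticOnNhd ℂ (uncurry F) univ) (a : ℂ)
    (j : ℕ) :
    iteratedDerivAtZero j (curry (shiftedEuler a (uncurry F))) =
      shiftedEuler (a + j) (iteratedDerivAtZero j F) := by
  funext z
  have hz : AnalyticAt ℂ (fun w => fderiv ℂ (uncurry F) (z, w) (z, 0)) 0 :=
    ((ContinuousLinearMap.apply ℂ ℂ ((z, 0) : E × ℂ)).analyticAt _ |>.comp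
      (hF (z, 0) trivial).fderiv).curry_right
  have hw : AnalyticAt ℂ (partialW F z) 0 := (hF.partialW (z, 0) trivial).curry_right
  have hwmul : AnalyticAt ℂ (fun w => w * partialW F z w) 0 := analyticAt_id.fun_mul hw
  have hamul : AnalyticAt ℂ (fun w => a * F z w) 0 :=
    analyticAt_const.fun_mul (hF (z, 0) trivial).curry_right
  have hmul : (j : ℂ) * iteratedDeriv (j - 1) (partialW F z) 0 =
      j * iteratedDerivAtZero j F z := by
    rcases j with _ | j
    · simp
    · rw [iteratedDerivAtZero_succ hF]; rfl
  rw [iteratedDerivAtZero, funext (curry_shiftedEuler_uncurry_apply a z),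
    iteratedDeriv_fun_add (hz.fun_add hwmul).contDiffAt hamul.contDiffAt,
    iteratedDeriv_fun_add hz.contDiffAt hwmul.contDiffAt,
    iteratedDeriv_id_mul_zero hw.contDiffAt, iteratedDeriv_const_mul_field,
    iteratedDeriv_fderiv_apply_fst hF, hmul, shiftedEuler]
  simp only [iteratedDerivAtZero]
  ring

variable {t μ : ℂ} {x : E} {k : ℤ}

/-- `invSlash (Q z) m (R_v z) k F w` is `(F|_k J_v)(z, w)`. -/
def invSlash (t μ : ℂ) (x : E) (k : ℤ) (F : E → ℂ → ℂ) : ℂ → ℂ :=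
  fun w => (t - μ * w ^ 2) ^ (-k) * F ((t - μ * w ^ 2)⁻¹ • x) ((t - μ * w ^ 2)⁻¹ * w)

theorem analyticAt_invSlash (hF : AnalyticOnNhd ℂ (uncurry F) univ) {w : ℂ}
    (hw : t - μ * w ^ 2 ≠ 0) : AnalyticAt ℂ (invSlash t μ x k F) w := by
  have hA : AnalyticAt ℂ (fun w : ℂ => t - μ * w ^ 2) w := by fun_prop
  exact (hA.fun_zpow hw).fun_mul <|
    (hF _ trivial).comp₂ ((hA.inv hw).smul analyticAt_const) ((hA.inv hw).mul analyticAt_id)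

theorem hasDerivAt_invSlash (hF : AnalyticOnNhd ℂ (uncurry F) univ) {w : ℂ}
    (hw : t - μ * w ^ 2 ≠ 0) :
    HasDerivAt (invSlash t μ x k F)
      (invSlash t μ x (k + 1) (partialW F) w +
        w * (2 * μ * invSlash t μ x (k + 1) (curry (shiftedEuler k (uncurry F))) w)) w := by
  have hA : HasDerivAt (fun w : ℂ => t - μ * w ^ 2) (-(2 * μ * w)) w :=
    (((hasDerivAt_pow 2 w).const_mul μ).const_sub t).congr_deriv (by norm_num; ring)
  have hAinv := hA.inv hw
  have hFp := (hF _ trivial).differentiableAt.hasFDerivAt.comp_hasDerivAt w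
    ((hAinv.smul_const x).prodMk (hAinv.mul (hasDerivAt_id w)))
  refine (((hasDerivAt_zpow (-k) _ (Or.inl hw)).comp w hA).mul hFp).congr_deriv ?_
  simp only [Function.comp_apply, Pi.inv_apply, Pi.mul_apply, id, neg_neg, mul_one]
  set A := t - μ * w ^ 2
  set p : E × ℂ := (A⁻¹ • x, A⁻¹ * w)
  set L := fderiv ℂ (uncurry F) p
  have hv : ((2 * μ * w / A ^ 2) • x, 2 * μ * w / A ^ 2 * w + A⁻¹) =
      (2 * μ * w / A) • p + A⁻¹ • ((0, 1) : E × ℂ) := by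
    simp only [p, Prod.smul_mk, Prod.mk_add_mk, smul_smul, smul_eq_mul, smul_zero, add_zero,
      mul_one]
    congr 1 <;> field_simp
  rw [hv, map_add, map_smul, map_smul]
  change _ = A ^ (-(k + 1)) * L (0, 1) + w * (2 * μ * (A ^ (-(k + 1)) * (L p + k * uncurry F p)))
  rw [show -(k + 1) = -k - 1 by ring, zpow_sub_one₀ hw]
  push_cast
  field_simp
  linear_combination (2 * μ * w * L p + L (0, 1)) * mul_inv_cancel₀ hw

theorem iteratedDeriv_succ_invSlash (hF : AnalyticOnNhd ℂ (uncurry F) univ) (ht : t ≠ 0)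
    (n : ℕ) :
    iteratedDeriv (n + 1) (invSlash t μ x k F) 0 =
      iteratedDeriv n (invSlash t μ x (k + 1) (partialW F)) 0 + 2 * μ * n *
        iteratedDeriv (n - 1) (invSlash t μ x (k + 1) (curry (shiftedEuler k (uncurry F)))) 0 := by
  set G := invSlash t μ x (k + 1) (curry (shiftedEuler k (uncurry F)))
  have h0 : t - μ * 0 ^ 2 ≠ 0 := by simpa using ht
  have hderiv : deriv (invSlash t μ x k F) =ᶠ[𝓝 0] fun w =>
      invSlash t μ x (k + 1) (partialW F) w + w * (2 * μ * G w) := by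
    have hcont : ContinuousAt (fun w : ℂ => t - μ * w ^ 2) 0 := by fun_prop
    filter_upwards [hcont.eventually_ne h0] with w hw
    exact (hasDerivAt_invSlash hF hw).deriv
  have hW := analyticAt_invSlash (x := x) (k := k + 1) hF.partialW h0
  have hG : AnalyticAt ℂ (fun w => 2 * μ * G w) 0 :=
    analyticAt_const.fun_mul
      (analyticAt_invSlash (F := curry (shiftedEuler k (uncurry F))) (hF.shiftedEuler k) h0)
  have hwG : AnalyticAt ℂ (fun w => w * (2 * μ * G w)) 0 := analyticAt_id.fun_mul hG
  rw [iteratedDeriv_succ', hderiv.iteratedDeriv_eq,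
    iteratedDeriv_fun_add hW.contDiffAt hwG.contDiffAt, iteratedDeriv_id_mul_zero hG.contDiffAt,
    iteratedDeriv_const_mul_field]
  ring

/-- `n! / (i! (n - 2i)!)` in a form that vanishes for `2i > n`, where the truncated
subtraction would not. -/
def pullbackCoeff (n i : ℕ) : ℂ := n.descFactorial (2 * i) / i.factorial

@[simp]
theorem pullbackCoeff_zero_right (n : ℕ) : pullbackCoeff n 0 = 1 := by
  simp [pullbackCoeff]

theorem pullbackCoeff_of_lt {n i : ℕ} (h : n < 2 * i) : pullbackCoeff n i = 0 := by
  simp [pullbackCoeff, Nat.descFactorial_eq_zero_iff_lt.mpr h]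

theorem pullbackCoeff_of_le {n i : ℕ} (h : 2 * i ≤ n) :
    pullbackCoeff n i = n.factorial / (i.factorial * (n - 2 * i).factorial) := by
  rw [pullbackCoeff, ← Nat.factorial_mul_descFactorial h, Nat.cast_mul,
    mul_comm (i.factorial : ℂ),
    mul_div_mul_left _ _ (Nat.cast_ne_zero.mpr (Nat.factorial_ne_zero _))]

theorem descFactorial_add_two_two_mul_add_two (m i : ℕ) :
    (m + 2).descFactorial (2 * i + 2) =
      (m + 1).descFactorial (2 * i + 2) + 2 * (i + 1) * (m + 1) * m.descFactorial (2 * i) := by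
  rw [Nat.succ_descFactorial_succ, Nat.succ_descFactorial_succ, Nat.succ_descFactorial_succ,
    Nat.descFactorial_succ]
  rcases le_or_gt (2 * i) m with h | h
  · obtain ⟨r, rfl⟩ := Nat.exists_eq_add_of_le h
    rw [Nat.add_sub_cancel_left]
    ring
  · simp [Nat.descFactorial_eq_zero_iff_lt.mpr h]

theorem pullbackCoeff_add_two_succ (m i : ℕ) :
    pullbackCoeff (m + 2) (i + 1) =
      pullbackCoeff (m + 1) (i + 1) + 2 * (m + 1) * pullbackCoeff m i := by
  simp only [pullbackCoeff, show 2 * (i + 1) = 2 * i + 2 by ring,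
    descFactorial_add_two_two_mul_add_two, Nat.factorial_succ]
  push_cast
  field_simp

theorem sum_pullbackCoeff_add_two (μ : ℂ) (m : ℕ) (T : ℕ → ℂ) :
    ∑ i ∈ Finset.range (m + 3), pullbackCoeff (m + 2) i * μ ^ i * T i =
      ∑ i ∈ Finset.range (m + 2), pullbackCoeff (m + 1) i * μ ^ i * T i + 2 * μ * (m + 1) *
        ∑ i ∈ Finset.range (m + 1), pullbackCoeff m i * μ ^ i * T (i + 1) := by
  rw [sum_range_succ', sum_range_succ, pullbackCoeff_of_lt (by omega), sum_range_succ' _ (m + 1),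
    mul_sum, pullbackCoeff_zero_right, pullbackCoeff_zero_right]
  have hterm (i : ℕ) : pullbackCoeff (m + 2) (i + 1) * μ ^ (i + 1) * T (i + 1) =
      pullbackCoeff (m + 1) (i + 1) * μ ^ (i + 1) * T (i + 1) +
        2 * μ * (m + 1) * (pullbackCoeff m i * μ ^ i * T (i + 1)) := by
    rw [pullbackCoeff_add_two_succ]; ring
  simp only [hterm, sum_add_distrib]
  ring

theorem sum_pullbackCoeff_eq_sum_factorial (μ : ℂ) (n : ℕ) (T : ℕ → ℂ) :
    ∑ i ∈ Finset.range (n + 1), pullbackCoeff n i * μ ^ i * T i =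
      ∑ i ∈ Finset.range (n / 2 + 1),
        (n.factorial : ℂ) / (i.factorial * (n - 2 * i).factorial) * μ ^ i * T i := by
  have hsub : Finset.range (n / 2 + 1) ⊆ Finset.range (n + 1) :=
    Finset.range_subset_range.mpr (Nat.succ_le_succ (Nat.div_le_self n 2))
  rw [← Finset.sum_subset hsub fun i _ hi => by
    rw [pullbackCoeff_of_lt (by simp at hi; omega), zero_mul, zero_mul]]
  exact Finset.sum_congr rfl fun i hi => by
    rw [pullbackCoeff_of_le (by simp at hi; omega)]

def pullbackTerm (t : ℂ) (x : E) (k : ℤ) (F : E → ℂ → ℂ) (n i : ℕ) : ℂ :=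
  t ^ (-(k + n - i) : ℤ) *
    risingEuler ((k : ℂ) + n - 2 * i) i (iteratedDerivAtZero (n - 2 * i) F) (t⁻¹ • x)

theorem pullbackTerm_partialW (hF : AnalyticOnNhd ℂ (uncurry F) univ) {n i : ℕ}
    (h : 2 * i ≤ n) :
    pullbackTerm t x (k + 1) (partialW F) n i = pullbackTerm t x k F (n + 1) i := by
  rw [pullbackTerm, pullbackTerm, ← iteratedDerivAtZero_succ hF, Nat.sub_add_comm h]
  push_cast
  ring_nf

theorem pullbackTerm_shiftedEuler (hF : AnalyticOnNhd ℂ (uncurry F) univ) {n i : ℕ}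
    (h : 2 * i ≤ n) :
    pullbackTerm t x (k + 1) (curry (shiftedEuler k (uncurry F))) n i =
      pullbackTerm t x k F (n + 2) (i + 1) := by
  have hc : ((k + 1 : ℤ) : ℂ) + n - 2 * i = (k + (n - 2 * i : ℕ) : ℂ) + 1 := by
    push_cast [h]; ring
  rw [pullbackTerm, pullbackTerm, iteratedDerivAtZero_shiftedEuler hF, hc,
    risingEuler_shiftedEuler_comm (hF.iteratedDerivAtZero _), ← risingEuler,
    show n + 2 - 2 * (i + 1) = n - 2 * i by omega]
  congr 2
  · push_cast; ring
  · push_cast [h]; ring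

theorem iteratedDeriv_invSlash_zero (hF : AnalyticOnNhd ℂ (uncurry F) univ) (ht : t ≠ 0)
    (n : ℕ) :
    iteratedDeriv n (invSlash t μ x k F) 0 =
      ∑ i ∈ Finset.range (n + 1), pullbackCoeff n i * μ ^ i * pullbackTerm t x k F n i := by
  induction n using Nat.twoStepInduction generalizing k F with
  | zero => simp [invSlash, pullbackTerm, risingEuler, iteratedDerivAtZero]
  | one =>
    rw [iteratedDeriv_succ_invSlash hF ht, sum_range_succ, pullbackCoeff_of_lt (by norm_num)]
    simp [invSlash, pullbackTerm, risingEuler, iteratedDerivAtZero,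
      (hasDerivAt_partialW hF _ _).deriv]
  | more n ih₀ ih₁ =>
    rw [iteratedDeriv_succ_invSlash hF ht, ih₁ hF.partialW, Nat.add_sub_cancel,
      ih₀ (F := curry (shiftedEuler k (uncurry F))) (hF.shiftedEuler k),
      sum_pullbackCoeff_add_two]
    push_cast
    congr 1
    · refine Finset.sum_congr rfl fun i _ => ?_
      rcases le_or_gt (2 * i) (n + 1) with h | h
      · rw [pullbackTerm_partialW hF h]
      · simp [pullbackCoeff_of_lt h]
    · congr 1
      refine Finset.sum_congr rfl fun i _ => ?_
      rcases le_or_gt (2 * i) n with h | h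
      · rw [pullbackTerm_shiftedEuler hF h]
      · simp [pullbackCoeff_of_lt h]

theorem risingEulerFun_eq_risingEuler (d : ℕ) (a : ℂ) (i : ℕ) (f : (Fin d → ℂ) → ℂ) :
    risingEulerFun d a i f = risingEuler a i f := by
  induction i generalizing a with
  | zero => rfl
  | succ i ih =>
    funext z
    have hsum := (fderiv ℂ (risingEuler (a + 1) i f) z).toLinearMap.pi_apply_eq_sum_univ z
    simp only [ContinuousLinearMap.coe_coe, smul_eq_mul] at hsum
    simp only [risingEulerFun, ih, risingEuler, shiftedEuler, hsum]
    congr! with j _ l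
    simp [Pi.single_apply, eq_comm]

end

theorem higher_pullback_inversion_lemma_general (d : ℕ)
    (Q : (Fin d → ℂ) → ℂ)
    (m : ℝ)
    (Rv : (Fin d → ℂ) → (Fin d → ℂ))
    (F : (Fin d → ℂ) → ℂ → ℂ)
    (hF : ∀ p : (Fin d → ℂ) × ℂ, AnalyticAt ℂ (fun q : (Fin d → ℂ) × ℂ => F q.1 q.2) p)
    (k : ℤ) (n : ℕ) (z : Fin d → ℂ) (hz : Q z ≠ 0) :
    iteratedDeriv n
        (fun w : ℂ =>
          (Q z - (m : ℂ) * w ^ 2) ^ (-k : ℤ) *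
            F ((Q z - (m : ℂ) * w ^ 2)⁻¹ • Rv z) ((Q z - (m : ℂ) * w ^ 2)⁻¹ * w)) 0
      = ∑ i ∈ Finset.range (n / 2 + 1),
          ((n.factorial : ℂ) / ((i.factorial : ℂ) * ((n - 2 * i).factorial : ℂ))) *
            (m : ℂ) ^ i *
            (Q z ^ (-(k + n - i) : ℤ) *
              risingEulerFun d ((k : ℂ) + n - 2 * i) i
                (fun z' => iteratedDeriv (n - 2 * i) (fun w : ℂ => F z' w) 0)
                ((Q z)⁻¹ • Rv z)) := by
  rw [← sum_pullbackCoeff_eq_sum_factorial]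
  have h := iteratedDeriv_invSlash_zero (μ := m) (x := Rv z) (k := k) (fun p _ => hF p) hz n
  simp only [pullbackTerm, ← risingEulerFun_eq_risingEuler] at h
  exact h

/-- Lemma 3.2: let `Q` be the quadratic form on `ℂ^{ℓ-1}` with symmetric Gram matrix `S`,
`m > 0`, `v` with `Q(v) = 1`, `R_v z = z - ⟨v,z⟩v`, and `F(z,w)` analytic.  With the slash
`(F|_k J_v)(z,w) = (Q(z) - m w²)^{-k} F(R_v z/(Q(z)-mw²), w/(Q(z)-mw²))` and, on functions of
`z` alone, `(g|_a J_v)(z) = Q(z)^{-a} g(R_v z/Q(z))`, one has at points with `Q(z) ≠ 0`: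
`∂_w^n|_{w=0}(F|_k J_v) = ∑_{i=0}^{⌊n/2⌋} (n!/(i!(n-2i)!)) m^i
    ((E_z+k+n-2i)^{(i)} ∂_w^{n-2i}|_{w=0} F)|_{k+n-i} J_v`. -/
theorem higher_pullback_inversion_lemma (d : ℕ) (S : Matrix (Fin d) (Fin d) ℂ)
    (hS : S.IsSymm)
    (Q : (Fin d → ℂ) → ℂ) (hQ : ∀ z, Q z = (1 / 2 : ℂ) * (z ⬝ᵥ S.mulVec z))
    (m : ℝ) (hm : 0 < m)
    (v : Fin d → ℂ) (hv : Q v = 1)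
    (Rv : (Fin d → ℂ) → (Fin d → ℂ)) (hRv : ∀ z, Rv z = z - (v ⬝ᵥ S.mulVec z) • v)
    (F : (Fin d → ℂ) → ℂ → ℂ)
    (hF : ∀ p : (Fin d → ℂ) × ℂ, AnalyticAt ℂ (fun q : (Fin d → ℂ) × ℂ => F q.1 q.2) p)
    (k : ℤ) (n : ℕ) (z : Fin d → ℂ) (hz : Q z ≠ 0) :
    iteratedDeriv n
        (fun w : ℂ =>
          (Q z - (m : ℂ) * w ^ 2) ^ (-k : ℤ) *
            F ((Q z - (m : ℂ) * w ^ 2)⁻¹ • Rv z) ((Q z - (m : ℂ) * w ^ 2)⁻¹ * w)) 0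
      = ∑ i ∈ Finset.range (n / 2 + 1),
          ((n.factorial : ℂ) / ((i.factorial : ℂ) * ((n - 2 * i).factorial : ℂ))) *
            (m : ℂ) ^ i *
            (Q z ^ (-(k + n - i) : ℤ) *
              risingEulerFun d ((k : ℂ) + n - 2 * i) i
                (fun z' => iteratedDeriv (n - 2 * i) (fun w : ℂ => F z' w) 0)
                ((Q z)⁻¹ • Rv z)) :=
  higher_pullback_inversion_lemma_general d Q m Rv F hF k n z hz
end
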